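/- arXiv:1910.07617 — 3 statements merged into one kernel-verified Lean document; each statement's English description precedes it below -/
import Mathlib

section
/- Let L ≥ 2 and let G_L be the MLP digraph with layers K_1, …, K_L, and let G_{L−1} denote the MLP digraph on the first L−1 layers K_1, …, K_{L−1}. Then any γ ∈ ker(∂_{L−1}|_{Ω_{L−1}(G_L)}) can be written as a finite sum γ = Σ_{i=1}^d w_i v_i with d ≥ 1, where each v_i ∈ K_L, each w_i ∈ ker(∂_{L−2}|_{Ω_{L−2}(G_{L−1})}), and w_i v_i denotes the join. -/
open Finsupp Submodule LinearMap

/-- Chain groups for (reduced) path homology: degree `0` is `Λ₋₁ = K`; degree `p+1` is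
`Λ_p`, the free `K`-vector space on elementary `p`-paths `(x_0, …, x_p)` over `X`. -/
def PChain (K : Type) [Field K] (X : Type) : ℕ → Type
  | 0 => K
  | p + 1 => (Fin (p + 1) → X) →₀ K

variable (K : Type) [Field K] (X : Type)

noncomputable instance instPChainAddCommGroup : ∀ n, AddCommGroup (PChain K X n)
  | 0 => inferInstanceAs (AddCommGroup K)
  | (p + 1) => inferInstanceAs (AddCommGroup ((Fin (p + 1) → X) →₀ K))

noncomputable instance instPChainModule : ∀ n, Module K (PChain K X n)
  | 0 => inferInstanceAs (Module K K)
  | (p + 1) => inferInstanceAs (Module K ((Fin (p + 1) → X) →₀ K))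

/-- The boundary map `∂ : Λ_p → Λ_{p-1}`; in lowest degree it is the augmentation
`Λ_0 → K` sending each vertex to `1`. -/
noncomputable def pBoundary : ∀ n, PChain K X (n + 1) →ₗ[K] PChain K X n
  | 0 => Finsupp.lsum K fun _ => LinearMap.id
  | (p + 1) =>
      Finsupp.lsum K fun x => LinearMap.toSpanSingleton K _
        (∑ i : Fin (p + 2), ((-1 : K) ^ (i : ℕ)) • Finsupp.single (x ∘ i.succAbove) (1 : K))

/-- The join (concatenation) of chains, extended bilinearly; joining with a scalar
(degree `0` chain, i.e. an element of `Λ₋₁ = K`) is scalar multiplication. -/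
noncomputable def pJoin : ∀ m n, PChain K X m →ₗ[K] PChain K X n →ₗ[K] PChain K X (m + n)
  | m, 0 => (LinearMap.lsmul K (PChain K X m)).flip
  | 0, n + 1 =>
      (LinearMap.lsmul K (PChain K X (0 + (n + 1)))).compl₂
        (Finsupp.lmapDomain K K fun g => g ∘ (finCongr (show 0 + (n + 1) = n + 1 by omega)))
  | m + 1, n + 1 =>
      show ((Fin (m + 1) → X) →₀ K) →ₗ[K] ((Fin (n + 1) → X) →₀ K) →ₗ[K]
          ((Fin ((m + 1) + (n + 1)) → X) →₀ K) from
        Finsupp.lsum K fun x => LinearMap.toSpanSingleton K _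
          (Finsupp.lsum K fun y => LinearMap.toSpanSingleton K _
            (Finsupp.single (Fin.append x y) (1 : K)))

/-- Transport of chains along an equality of degrees. -/
noncomputable def pCast {m n : ℕ} (h : m = n) : PChain K X m ≃ₗ[K] PChain K X n := by
  subst h; exact LinearEquiv.refl K _

/-- An elementary `p`-path is allowed in a digraph (with vertex set `S ⊆ X` and edge
relation `E`) if all its vertices lie in `S` and all its consecutive pairs are edges. -/
def IsAllowed (S : Set X) (E : X → X → Prop) (p : ℕ) (x : Fin (p + 1) → X) : Prop :=
  (∀ k, x k ∈ S) ∧ ∀ i : Fin p, E (x i.castSucc) (x i.succ)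

/-- The space `A_p` of allowed `p`-paths (in chain degree `p+1`); `A₋₁ = K`. -/
noncomputable def allowedSub (S : Set X) (E : X → X → Prop) : ∀ n, Submodule K (PChain K X n)
  | 0 => ⊤
  | p + 1 => Finsupp.supported K K {x | IsAllowed X S E p x}

/-- The space `Ω_p` of ∂-invariant allowed `p`-paths (in chain degree `p+1`). -/
noncomputable def omegaSub (S : Set X) (E : X → X → Prop) : ∀ n, Submodule K (PChain K X n)
  | 0 => ⊤
  | p + 1 => allowedSub K X S E (p + 1) ⊓
      Submodule.comap (pBoundary K X p) (allowedSub K X S E p)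

/-- The rank of the reduced path homology `H_p^Ξ = ker(∂_p|_{Ω_p}) / im(∂_{p+1}|_{Ω_{p+1}})`,
realized as the image of the cycles in the quotient of the ambient chain space by the
boundaries (the boundaries form a subspace of the cycles). -/
noncomputable def pathHomRank (S : Set X) (E : X → X → Prop) (p : ℕ) : Cardinal :=
  Module.rank K
    (Submodule.map (Submodule.map (pBoundary K X (p + 1)) (omegaSub K X S E (p + 2))).mkQ
      (omegaSub K X S E (p + 1) ⊓ LinearMap.ker (pBoundary K X p)))

/-- A directed `p`-simplex: a sequence of vertices with an edge `x i → x j` whenever `i < j`. -/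
def IsDirSimplex (E : X → X → Prop) (p : ℕ) (x : Fin (p + 1) → X) : Prop :=
  ∀ i j : Fin (p + 1), i < j → E (x i) (x j)

/-- The free `K`-vector space `F_p` on directed `p`-simplices (in chain degree `p+1`). -/
def dfcSub (E : X → X → Prop) (p : ℕ) : Submodule K (PChain K X (p + 1)) :=
  Finsupp.supported K K {x | IsDirSimplex X E p x}

/-- The rank of the directed flag complex homology
`H_p^F = ker(∂_p|_{F_p}) / im(∂_{p+1}|_{F_{p+1}})` (with `F₋₁ = 0`, so in degree `0` the
cycles are all of `F_0`), realized as the image of the cycles in the quotient of the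
ambient chain space by the boundaries. -/
noncomputable def dfcHomRank (E : X → X → Prop) : ℕ → Cardinal
  | 0 => Module.rank K
      (Submodule.map (Submodule.map (pBoundary K X 1) (dfcSub K X E 1)).mkQ
        (dfcSub K X E 0))
  | p + 1 => Module.rank K
      (Submodule.map (Submodule.map (pBoundary K X (p + 2)) (dfcSub K X E (p + 2))).mkQ
        (dfcSub K X E (p + 1) ⊓ LinearMap.ker (pBoundary K X (p + 1))))

/-- The adjacency relation of the underlying undirected graph of a digraph. -/
def UAdj (E : X → X → Prop) (v w : X) : Prop := E v w ∨ E w v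

/-- The simplicial boundary `∂[v,v'] = v' - v` on the free space on ordered pairs. -/
noncomputable def simpD : ((X × X) →₀ K) →ₗ[K] (X →₀ K) :=
  Finsupp.lsum K fun e => LinearMap.toSpanSingleton K _
    (Finsupp.single e.2 (1 : K) - Finsupp.single e.1 (1 : K))

/-- The free `K`-vector space on the oriented edges of the underlying undirected graph. -/
def edgeSub (E : X → X → Prop) : Submodule K ((X × X) →₀ K) :=
  Finsupp.supported K K {e : X × X | UAdj X E e.1 e.2}

/-- The span of the relations `[v,v'] + [v',v]` (encoding `[v,v'] = -[v',v]`). -/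
noncomputable def relSub (E : X → X → Prop) : Submodule K ((X × X) →₀ K) :=
  Submodule.span K {c | ∃ v w, UAdj X E v w ∧
    c = Finsupp.single (v, w) (1 : K) + Finsupp.single (w, v) (1 : K)}

/-- The rank of the simplicial homology `H_p^Δ` of the underlying undirected graph, viewed
as a simplicial complex: `C_0^Δ` is free on vertices, `C_1^Δ` is free on oriented edges
modulo the relations `[v,v'] = -[v',v]`, and `C_p^Δ = 0` for `p ≥ 2`. Since `C_2^Δ = 0`,
`H_1^Δ = ker ∂_1 ⊆ C_1^Δ` is the image of `{c ∈ edgeSub : ∂ c = 0}` in the quotient by the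
relations (which are themselves cycles supported on edges). -/
noncomputable def simpHomRank (E : X → X → Prop) : ℕ → Cardinal
  | 0 => Module.rank K ((X →₀ K) ⧸ Submodule.map (simpD K X) (edgeSub K X E))
  | 1 => Module.rank K
      (Submodule.map (relSub K X E).mkQ (edgeSub K X E ⊓ LinearMap.ker (simpD K X)))
  | _ + 2 => 0

/-- The vertex set of an MLP with `L` layers, the `i`-th layer (`0`-indexed) of width `n i`. -/
def MLPVertex (L : ℕ) (n : ℕ → ℕ) : Type := (i : Fin L) × Fin (n i)

/-- The edges of the MLP digraph: all arcs from layer `i` to layer `i+1`. -/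
def MLPEdge (L : ℕ) (n : ℕ → ℕ) (v w : MLPVertex L n) : Prop :=
  (w.1 : ℕ) = (v.1 : ℕ) + 1

/-- The `i`-th layer `K_i` of the MLP, `1`-indexed (so `i` ranges over `1, …, L`). -/
def MLPLayer (L : ℕ) (n : ℕ → ℕ) (i : ℕ) : Set (MLPVertex L n) :=
  {v | (v.1 : ℕ) + 1 = i}

/-- The degree-`1` chain (i.e. elementary `0`-path) corresponding to a single vertex. -/
noncomputable def vertChain (x : X) : PChain K X 1 := Finsupp.single (fun _ => x) (1 : K)

/-- The subspace of `Λ_p` of chains supported on a given set of elementary `p`-paths. -/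
def suppSub (p : ℕ) (s : Set (Fin (p + 1) → X)) : Submodule K (PChain K X (p + 1)) :=
  Finsupp.supported K K s

set_option linter.unusedSectionVars false
set_option maxHeartbeats 1000000

section AuxJoin

variable {K X}
variable [DecidableEq X]

lemma pBoundary_single (p : ℕ) (x : Fin (p + 2) → X) (c : K) :
    pBoundary K X (p + 1) (Finsupp.single x c) =
      c • ∑ i : Fin (p + 2), ((-1 : K) ^ (i : ℕ)) • Finsupp.single (x ∘ i.succAbove) (1 : K) := by
  rw [pBoundary]; erw [Finsupp.lsum_single, LinearMap.toSpanSingleton_apply]; rfl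

lemma pJoin_single_single (m p : ℕ) (x : Fin (m + 1) → X) (y : Fin (p + 1) → X) (c c' : K) :
    pJoin K X (m + 1) (p + 1) (Finsupp.single x c) (Finsupp.single y c') =
      Finsupp.single (Fin.append x y) (c * c') := by
  rw [pJoin]; erw [Finsupp.lsum_single, LinearMap.toSpanSingleton_apply]
  show c • (Finsupp.lsum K (fun z => LinearMap.toSpanSingleton K ((Fin (m + 1 + (p + 1)) → X) →₀ K)
    (Finsupp.single (Fin.append x z) (1 : K))) (Finsupp.single y c')) = _
  erw [Finsupp.lsum_single, LinearMap.toSpanSingleton_apply]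
  rw [smul_smul, Finsupp.smul_single, smul_eq_mul, mul_one]

lemma pJoin_single_vert (m : ℕ) (x : Fin (m + 1) → X) (c : K) (v : X) :
    pJoin K X (m + 1) 1 (Finsupp.single x c) (vertChain K X v) =
      Finsupp.single (Fin.snoc x v) c := by
  have h := pJoin_single_single (K := K) (X := X) m 0 x (fun _ => v) c 1
  rw [mul_one, Fin.append_right_eq_snoc] at h
  exact h

noncomputable def projV (p : ℕ) (v : X) :
    ((Fin (p + 2) → X) →₀ K) →ₗ[K] ((Fin (p + 1) → X) →₀ K) :=
  Finsupp.lsum K fun x => LinearMap.toSpanSingleton K _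
    (if x (Fin.last (p + 1)) = v then Finsupp.single (Fin.init x) (1 : K) else 0)

noncomputable def selV (p : ℕ) (v : X) :
    ((Fin (p + 1) → X) →₀ K) →ₗ[K] ((Fin (p + 1) → X) →₀ K) :=
  Finsupp.lsum K fun y => LinearMap.toSpanSingleton K _
    (if y (Fin.last p) = v then Finsupp.single y (1 : K) else 0)

lemma projV_single (p : ℕ) (v : X) (x : Fin (p + 2) → X) (c : K) :
    projV p v (Finsupp.single x c) =
      if x (Fin.last (p + 1)) = v then Finsupp.single (Fin.init x) c else 0 := by
  rw [projV, Finsupp.lsum_single, LinearMap.toSpanSingleton_apply]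
  split <;> simp

lemma selV_single (p : ℕ) (v : X) (y : Fin (p + 1) → X) (c : K) :
    selV p v (Finsupp.single y c) =
      if y (Fin.last p) = v then Finsupp.single y c else 0 := by
  rw [selV, Finsupp.lsum_single, LinearMap.toSpanSingleton_apply]
  split <;> simp

lemma snoc_init_succAbove {p : ℕ} (x : Fin (p + 2) → X) (v : X)
    (h : x (Fin.last (p + 1)) = v) (j : Fin (p + 1)) :
    Fin.snoc (Fin.init x ∘ j.succAbove) v = x ∘ (j.castSucc).succAbove := by
  funext k
  refine Fin.lastCases ?_ ?_ k
  · rw [Fin.snoc_last, Function.comp_apply,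
      Fin.succAbove_castSucc_of_le j (Fin.last p) (Fin.le_last j), Fin.succ_last, h]
  · intro k'
    rw [Function.comp_apply, Fin.snoc_castSucc, Fin.castSucc_succAbove_castSucc]
    rfl

/-- Computation of `pJoin M 1 (∂ (single y c)) (vertChain v)`, uniform in `M`. -/
lemma pJoin_boundary_single_vert (m : ℕ) (y : Fin (m + 1) → X) (c : K) (v : X) :
    pJoin K X m 1 (pBoundary K X m (Finsupp.single y c)) (vertChain K X v) =
      c • ∑ j : Fin (m + 1), ((-1 : K) ^ (j : ℕ)) •
        Finsupp.single (Fin.snoc (y ∘ j.succAbove) v) (1 : K) := by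
  cases m with
  | zero =>
      have h1 : pBoundary K X 0 (Finsupp.single y c) = c := by
        rw [pBoundary]; erw [Finsupp.lsum_single]; rfl
      rw [h1, Fin.sum_univ_one]
      show c • (Finsupp.mapDomain
          (fun g : Fin (0 + 1) → X => g ∘ (finCongr (show 0 + (0 + 1) = 0 + 1 by omega)))
          (Finsupp.single (fun _ : Fin (0 + 1) => v) (1 : K))) =
        c • ((-1 : K) ^ ((0 : Fin 1) : ℕ) • Finsupp.single (Fin.snoc (y ∘ Fin.succAbove 0) v) (1 : K))
      rw [Finsupp.mapDomain_single]
      have h0 : ((0 : Fin 1) : ℕ) = 0 := rfl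
      rw [h0, pow_zero, one_smul]
      congr 2
  | succ p =>
      erw [pBoundary_single, map_smul, map_sum, LinearMap.smul_apply, LinearMap.sum_apply]
      congr 1
      refine Finset.sum_congr rfl fun i _ => ?_
      erw [map_smul, LinearMap.smul_apply, pJoin_single_vert]; rfl

end AuxJoin

section AuxMLP

instance (L : ℕ) (n : ℕ → ℕ) : DecidableEq (MLPVertex L n) :=
  inferInstanceAs (DecidableEq ((i : Fin L) × Fin (n i)))

instance (L : ℕ) (n : ℕ → ℕ) : Fintype (MLPVertex L n) :=
  inferInstanceAs (Fintype ((i : Fin L) × Fin (n i)))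

variable {K : Type} [Field K] {M : ℕ} {n : ℕ → ℕ}

lemma mlp_layer {x : Fin (M + 2) → MLPVertex (M + 2) n}
    (hx : ∀ i : Fin (M + 1), MLPEdge (M + 2) n (x i.castSucc) (x i.succ))
    (k : Fin (M + 2)) : ((x k).1 : ℕ) = (k : ℕ) := by
  have h1 : ∀ k : Fin (M + 2), ((x k).1 : ℕ) = ((x 0).1 : ℕ) + (k : ℕ) := by
    intro k
    induction k using Fin.induction with
    | zero => simp
    | succ i ih =>
        have h := hx i
        rw [MLPEdge] at h
        rw [h, ih]
        simp only [Fin.coe_castSucc, Fin.val_succ]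
        omega
  have h2 := h1 (Fin.last (M + 1))
  rw [Fin.val_last] at h2
  have h3 : ((x (Fin.last (M + 1))).1 : ℕ) < M + 2 := (x _).1.isLt
  have h0 : ((x 0).1 : ℕ) = 0 := by omega
  rw [h1 k, h0, zero_add]

lemma selV_comm_single (v : MLPVertex (M + 2) n) (hv : (v.1 : ℕ) = M + 1)
    {x : Fin (M + 2) → MLPVertex (M + 2) n}
    (hx : ∀ i : Fin (M + 1), MLPEdge (M + 2) n (x i.castSucc) (x i.succ)) (c : K) :
    selV M v (pBoundary K (MLPVertex (M + 2) n) (M + 1) (Finsupp.single x c)) =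
      pJoin K (MLPVertex (M + 2) n) M 1
        (pBoundary K (MLPVertex (M + 2) n) M (projV M v (Finsupp.single x c)))
        (vertChain K (MLPVertex (M + 2) n) v) := by
  have hlast : ∀ j : Fin (M + 1),
      (x ∘ (j.castSucc).succAbove) (Fin.last M) = x (Fin.last (M + 1)) := by
    intro j
    show x ((j.castSucc).succAbove (Fin.last M)) = _
    rw [Fin.succAbove_castSucc_of_le j (Fin.last M) (Fin.le_last j), Fin.succ_last]
  have hlayerlast : (x ∘ (Fin.last (M + 1)).succAbove) (Fin.last M) ≠ v := by
    intro hc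
    have h1 : ((x ((Fin.last M).castSucc)).1 : ℕ) = M := by
      rw [mlp_layer hx ((Fin.last M).castSucc)]; simp
    rw [Fin.succAbove_last] at hc
    have hc' : x ((Fin.last M).castSucc) = v := hc
    rw [hc', hv] at h1
    omega
  rw [pBoundary_single, map_smul, map_sum, projV_single]
  have hsum : ∀ i : Fin (M + 2),
      selV M v (((-1 : K) ^ (i : ℕ)) • Finsupp.single (x ∘ i.succAbove) (1 : K)) =
        ((-1 : K) ^ (i : ℕ)) •
          (if (x ∘ i.succAbove) (Fin.last M) = v
            then Finsupp.single (x ∘ i.succAbove) (1 : K) else 0) := by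
    intro i
    rw [map_smul, selV_single]
  simp only [hsum]
  rw [Fin.sum_univ_castSucc, if_neg hlayerlast, smul_zero, add_zero]
  simp only [hlast, Fin.coe_castSucc]
  by_cases hc : x (Fin.last (M + 1)) = v
  · rw [if_pos hc, pJoin_boundary_single_vert]
    congr 1
    refine Finset.sum_congr rfl fun j _ => ?_
    rw [if_pos hc, snoc_init_succAbove x v hc j]
  · simp only [if_neg hc, smul_zero, Finset.sum_const_zero, map_zero, LinearMap.zero_apply]
    erw [map_zero, map_zero, LinearMap.zero_apply]; rfl

end AuxMLP


section AuxMLP2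

variable {K : Type} [Field K] {M : ℕ} {n : ℕ → ℕ}

lemma selV_comm (v : MLPVertex (M + 2) n) (hv : (v.1 : ℕ) = M + 1)
    (γ : PChain K (MLPVertex (M + 2) n) (M + 2))
    (hγ : γ ∈ Finsupp.supported K K
      {x : Fin (M + 2) → MLPVertex (M + 2) n |
        IsAllowed (MLPVertex (M + 2) n) Set.univ (MLPEdge (M + 2) n) (M + 1) x}) :
    selV M v (pBoundary K (MLPVertex (M + 2) n) (M + 1) γ) =
      pJoin K (MLPVertex (M + 2) n) M 1
        (pBoundary K (MLPVertex (M + 2) n) M (projV M v γ))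
        (vertChain K (MLPVertex (M + 2) n) v) := by
  rw [Finsupp.supported_eq_span_single] at hγ
  induction hγ using Submodule.span_induction with
  | mem z hz =>
      obtain ⟨x, hxA, rfl⟩ := hz
      exact selV_comm_single v hv hxA.2 1
  | zero => erw [map_zero, map_zero, map_zero]; rfl
  | add a b ha hb iha ihb =>
      erw [map_add, map_add, map_add, map_add, map_add, LinearMap.add_apply, iha, ihb]; rfl
  | smul a z hz ih =>
      erw [map_smul, map_smul, map_smul, map_smul, map_smul, LinearMap.smul_apply, ih]; rfl

lemma proj_mem (v : MLPVertex (M + 2) n) (γ : PChain K (MLPVertex (M + 2) n) (M + 2))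
    (hγ : γ ∈ Finsupp.supported K K
      {x : Fin (M + 2) → MLPVertex (M + 2) n |
        IsAllowed (MLPVertex (M + 2) n) Set.univ (MLPEdge (M + 2) n) (M + 1) x}) :
    projV M v γ ∈ Finsupp.supported K K
      {y : Fin (M + 1) → MLPVertex (M + 2) n |
        IsAllowed (MLPVertex (M + 2) n)
          {x : MLPVertex (M + 2) n | (x.1 : ℕ) + 1 ≤ M + 1} (MLPEdge (M + 2) n) M y} := by
  rw [Finsupp.supported_eq_span_single] at hγ
  induction hγ using Submodule.span_induction with
  | mem z hz =>
      obtain ⟨x, hxA, rfl⟩ := hz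
      rw [projV_single]
      split
      · refine Finsupp.single_mem_supported K 1 ?_
        refine ⟨fun k => ?_, fun i => ?_⟩
        · show ((Fin.init x k).1 : ℕ) + 1 ≤ M + 1
          have := mlp_layer hxA.2 k.castSucc
          rw [Fin.coe_castSucc] at this
          show ((x k.castSucc).1 : ℕ) + 1 ≤ M + 1
          rw [this]
          exact Nat.add_le_add_right (Nat.le_of_lt_succ k.isLt) 1
        · show MLPEdge (M + 2) n (Fin.init x i.castSucc) (Fin.init x i.succ)
          have h := hxA.2 i.castSucc
          show MLPEdge (M + 2) n (x i.castSucc.castSucc) (x i.succ.castSucc)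
          rw [← Fin.succ_castSucc]
          exact h
      · exact Submodule.zero_mem _
  | zero => convert Submodule.zero_mem _ using 2; exact map_zero _
  | add a b ha hb iha ihb => convert Submodule.add_mem _ iha ihb using 2; exact map_add _ _ _
  | smul a z hz ih => convert Submodule.smul_mem _ a ih using 2; exact map_smul _ _ _

lemma recon (γ : PChain K (MLPVertex (M + 2) n) (M + 2))
    (hγ : γ ∈ Finsupp.supported K K
      {x : Fin (M + 2) → MLPVertex (M + 2) n |
        IsAllowed (MLPVertex (M + 2) n) Set.univ (MLPEdge (M + 2) n) (M + 1) x}) :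
    γ = ∑ v ∈ Finset.filter (fun v : MLPVertex (M + 2) n => (v.1 : ℕ) = M + 1) Finset.univ,
      pJoin K (MLPVertex (M + 2) n) (M + 1) 1 (projV M v γ)
        (vertChain K (MLPVertex (M + 2) n) v) := by
  rw [Finsupp.supported_eq_span_single] at hγ
  induction hγ using Submodule.span_induction with
  | mem z hz =>
      obtain ⟨x, hxA, rfl⟩ := hz
      have hu : ((x (Fin.last (M + 1))).1 : ℕ) = M + 1 := by
        rw [mlp_layer hxA.2 (Fin.last (M + 1)), Fin.val_last]
      rw [Finset.sum_eq_single (x (Fin.last (M + 1)))]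
      · rw [projV_single, if_pos rfl, pJoin_single_vert, Fin.snoc_init_self]
      · intro b _ hb
        rw [projV_single, if_neg (fun hxb => hb hxb.symm)]
        erw [map_zero, LinearMap.zero_apply]
      · intro hnot
        exact absurd (Finset.mem_filter.mpr
          ⟨Finset.mem_univ (x (Fin.last (M + 1))), hu⟩) hnot
  | zero =>
      symm
      refine Finset.sum_eq_zero fun v _ => ?_
      erw [map_zero]; rfl
  | add a b ha hb iha ihb =>
      conv_rhs => enter [2, v]; erw [map_add, LinearMap.map_add₂]
      rw [Finset.sum_add_distrib, ← iha, ← ihb]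
      rfl
  | smul a z hz ih =>
      conv_rhs => enter [2, v]; erw [map_smul, LinearMap.map_smul₂]
      rw [← Finset.smul_sum, ← ih]
      rfl

lemma join_vert_eq_zero {X : Type} [DecidableEq X] {m : ℕ} (cc : PChain K X m) (v : X)
    (h : pJoin K X m 1 cc (vertChain K X v) = 0) : cc = 0 := by
  cases m with
  | zero =>
      have h2 : (show K from cc) • (Finsupp.mapDomain
          (fun g : Fin (0 + 1) → X => g ∘ (finCongr (show 0 + (0 + 1) = 0 + 1 by omega)))
          (Finsupp.single (fun _ : Fin (0 + 1) => v) (1 : K))) = 0 := h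
      rw [Finsupp.mapDomain_single, Finsupp.smul_single, smul_eq_mul, mul_one] at h2
      exact Finsupp.single_eq_zero.mp h2
  | succ p =>
      have key : ∀ c : (Fin (p + 1) → X) →₀ K, ∀ y0 : Fin (p + 1) → X,
          Finsupp.lapply (M := K) (R := K) (Fin.snoc y0 v)
            (pJoin K X (p + 1) 1 c (vertChain K X v)) = Finsupp.lapply (M := K) (R := K) y0 c := by
        intro c y0
        induction c using Finsupp.induction_linear with
        | zero => simp only [map_zero, LinearMap.zero_apply]; erw [LinearMap.map_zero₂, map_zero]
        | add f g hf hg => erw [LinearMap.map_add₂, map_add, hf, hg, map_add]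
        | single y a =>
            rw [pJoin_single_vert]
            erw [Finsupp.lapply_apply, Finsupp.lapply_apply]
            rw [Finsupp.single_apply, Finsupp.single_apply]
            by_cases hy : y = y0
            · subst hy; rw [if_pos rfl, if_pos rfl]
            · rw [if_neg hy, if_neg (fun hc => hy (by
                have := congrArg Fin.init hc
                rwa [Fin.init_snoc, Fin.init_snoc] at this))]
      refine Finsupp.ext fun y0 => ?_
      have h3 := key cc y0
      rw [h] at h3; erw [map_zero] at h3
      erw [Finsupp.lapply_apply] at h3
      exact h3.symm

end AuxMLP2

/-- Write `L = M + 2 ≥ 2`. Any `γ` in the kernel of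
`∂_{L-1} : Ω_{L-1}(G_L) → …` is a finite sum `Σᵢ wᵢ vᵢ` with `vᵢ` vertices of the last layer
`K_L` and `wᵢ ∈ ker(∂_{L-2}|_{Ω_{L-2}(G_{L-1})})`, where `G_{L-1}` is the MLP on the first
`L-1` layers (the sub-digraph on the vertices of layers `K_1, …, K_{L-1}`). -/
theorem mlp_kernel_repn_sum (K : Type) [Field K] (M : ℕ) (n : ℕ → ℕ) (hn : ∀ i, 1 ≤ n i)
    (γ : PChain K (MLPVertex (M + 2) n) (M + 2))
    (hΩ : γ ∈ omegaSub K (MLPVertex (M + 2) n) Set.univ (MLPEdge (M + 2) n) (M + 2))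
    (hker : pBoundary K (MLPVertex (M + 2) n) (M + 1) γ = 0) :
    ∃ (d : ℕ) (w : Fin d → PChain K (MLPVertex (M + 2) n) (M + 1))
      (v : Fin d → MLPVertex (M + 2) n),
      1 ≤ d ∧
      (∀ i, w i ∈ omegaSub K (MLPVertex (M + 2) n)
        {x : MLPVertex (M + 2) n | (x.1 : ℕ) + 1 ≤ M + 1} (MLPEdge (M + 2) n) (M + 1)) ∧
      (∀ i, pBoundary K (MLPVertex (M + 2) n) M (w i) = 0) ∧
      (∀ i, v i ∈ MLPLayer (M + 2) n (M + 2)) ∧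
      γ = ∑ i, pJoin K (MLPVertex (M + 2) n) (M + 1) 1 (w i)
            (vertChain K (MLPVertex (M + 2) n) (v i)) := by
  classical
  have hA : γ ∈ Finsupp.supported K K
      {x : Fin (M + 2) → MLPVertex (M + 2) n |
        IsAllowed (MLPVertex (M + 2) n) Set.univ (MLPEdge (M + 2) n) (M + 1) x} := hΩ.1
  set S : Finset (MLPVertex (M + 2) n) :=
    Finset.filter (fun v : MLPVertex (M + 2) n => (v.1 : ℕ) = M + 1) Finset.univ with hS
  have hSne : S.Nonempty := by
    refine ⟨⟨Fin.last (M + 1), ⟨0, hn _⟩⟩, ?_⟩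
    refine Finset.mem_filter.mpr ?_
    exact ⟨Finset.mem_univ _, by simp [Fin.val_last]⟩
  set e := S.equivFin with he
  have hwker : ∀ v ∈ S, pBoundary K (MLPVertex (M + 2) n) M (projV M v γ) = 0 := by
    intro v hv
    have hv1 := (Finset.mem_filter.mp hv).2
    refine join_vert_eq_zero _ v ?_
    rw [← selV_comm v hv1 γ hA, hker]
    exact map_zero _
  refine ⟨S.card, fun i => projV M (e.symm i).1 γ, fun i => (e.symm i).1,
    Finset.card_pos.mpr hSne, ?_, fun i => hwker _ (e.symm i).2, ?_, ?_⟩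
  · intro i
    refine Submodule.mem_inf.mpr ⟨proj_mem _ γ hA, Submodule.mem_comap.mpr ?_⟩
    rw [hwker _ (e.symm i).2]
    exact Submodule.zero_mem _
  · intro i
    have hv1 := (Finset.mem_filter.mp (e.symm i).2).2
    show (((e.symm i).1.fst : ℕ)) + 1 = M + 2
    omega
  · calc γ = ∑ v ∈ S, pJoin K (MLPVertex (M + 2) n) (M + 1) 1 (projV M v γ)
          (vertChain K (MLPVertex (M + 2) n) v) := recon γ hA
      _ = ∑ u : {x // x ∈ S}, pJoin K (MLPVertex (M + 2) n) (M + 1) 1 (projV M u.1 γ)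
          (vertChain K (MLPVertex (M + 2) n) u.1) := (Finset.sum_coe_sort S _).symm
      _ = ∑ i : Fin S.card, pJoin K (MLPVertex (M + 2) n) (M + 1) 1 (projV M (e.symm i).1 γ)
          (vertChain K (MLPVertex (M + 2) n) (e.symm i).1) :=
            (Equiv.sum_comp e.symm (fun u : {x // x ∈ S} =>
              pJoin K (MLPVertex (M + 2) n) (M + 1) 1 (projV M u.1 γ)
                (vertChain K (MLPVertex (M + 2) n) u.1))).symm
end

section
/- Let G_2 be the two-layer MLP digraph with first layer vertices u_1, …, u_{n_1} and second layer vertices v_1, …, v_{n_2}. Then ker(∂_1|_{Ω_1(G_2)}) is spanned by the elements {(u_1 − u_j)(v_1 − v_k) : 2 ≤ j ≤ n_1, 2 ≤ k ≤ n_2}, and dim ker(∂_1|_{Ω_1(G_2)}) = (n_1 − 1)(n_2 − 1). -/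
open Finsupp Submodule LinearMap

variable (K : Type) [Field K] (X : Type)

namespace MLPAux

variable {K : Type} [Field K] {n : ℕ → ℕ}

/-- generic representation lemma -/
lemma finsupp_repr {ι α M R : Type} [Fintype ι] [Semiring R] [AddCommMonoid M] [Module R M]
    (f : ι → α) (hf : Function.Injective f) (c : α →₀ M)
    (hc : c ∈ Finsupp.supported M R (Set.range f)) :
    c = ∑ i, Finsupp.single (f i) (c (f i)) := by
  classical
  ext y
  rw [Finsupp.finset_sum_apply]
  by_cases hy : y ∈ Set.range f
  · obtain ⟨i, rfl⟩ := hy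
    rw [Finset.sum_eq_single i (fun j _ hj => by
        rw [Finsupp.single_apply, if_neg (fun h => hj (hf h))]) (by simp)]
    simp
  · have hcy : c y = 0 := by
      by_contra h; exact hy (hc (Finsupp.mem_support_iff.mpr h))
    rw [hcy]
    refine (Finset.sum_eq_zero fun j _ => ?_).symm
    rw [Finsupp.single_apply, if_neg]; rintro rfl; exact hy ⟨j, rfl⟩

def uu (n : ℕ → ℕ) (a : Fin (n 0)) : MLPVertex 2 n := ⟨⟨0, Nat.zero_lt_two⟩, a⟩
def vv (n : ℕ → ℕ) (b : Fin (n 1)) : MLPVertex 2 n := ⟨⟨1, Nat.one_lt_two⟩, b⟩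
def PP (n : ℕ → ℕ) (p : Fin (n 0) × Fin (n 1)) : Fin 2 → MLPVertex 2 n := ![uu n p.1, vv n p.2]

@[simp] lemma uu_inj {a a' : Fin (n 0)} : uu n a = uu n a' ↔ a = a' := by
  constructor
  · intro h
    unfold uu at h
    injection h
  · rintro rfl; rfl

@[simp] lemma vv_inj {b b' : Fin (n 1)} : vv n b = vv n b' ↔ b = b' := by
  constructor
  · intro h
    unfold vv at h
    injection h
  · rintro rfl; rfl

@[simp] lemma uu_ne_vv (a : Fin (n 0)) (b : Fin (n 1)) : uu n a ≠ vv n b := by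
  intro h
  have h1 := congrArg (fun z : MLPVertex 2 n => (z.1 : ℕ)) h
  simp [uu, vv] at h1

@[simp] lemma cst_inj {x y : MLPVertex 2 n} :
    (fun _ : Fin 1 => x) = (fun _ : Fin 1 => y) ↔ x = y :=
  ⟨fun h => congrFun h 0, by rintro rfl; rfl⟩

@[simp] lemma PP_inj {p q : Fin (n 0) × Fin (n 1)} : PP n p = PP n q ↔ p = q := by
  constructor
  · intro h
    have h0 := congrFun h 0
    have h1 := congrFun h 1
    simp only [PP, Matrix.cons_val_zero, Matrix.cons_val_one, Matrix.head_cons] at h0 h1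
    exact Prod.ext (uu_inj.mp h0) (vv_inj.mp h1)
  · rintro rfl; rfl

@[simp] lemma PP_apply0 (p) : PP n p 0 = uu n p.1 := rfl
@[simp] lemma PP_apply1 (p) : PP n p 1 = vv n p.2 := rfl

lemma bd_single (x : Fin 2 → MLPVertex 2 n) (k : K) :
    pBoundary K (MLPVertex 2 n) 1 (Finsupp.single x k) =
      Finsupp.single (fun _ => x 1) k - Finsupp.single (fun _ => x 0) k := by
  show Finsupp.lsum K _ _ = _
  erw [Finsupp.lsum_single]
  rw [LinearMap.toSpanSingleton_apply]
  show (k • (∑ i : Fin 2, ((-1:K)^(i:ℕ)) • (Finsupp.single (x ∘ i.succAbove) (1:K) :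
      (Fin 1 → MLPVertex 2 n) →₀ K)) : (Fin 1 → MLPVertex 2 n) →₀ K) =
    (Finsupp.single (fun _ => x 1) k - Finsupp.single (fun _ => x 0) k : (Fin 1 → MLPVertex 2 n) →₀ K)
  rw [Fin.sum_univ_two]
  have h0 : x ∘ (0:Fin 2).succAbove = fun _ => x 1 := by
    funext j; have : j = 0 := Subsingleton.elim _ _; subst this; rfl
  have h1 : x ∘ (1:Fin 2).succAbove = fun _ => x 0 := by
    funext j; have : j = 0 := Subsingleton.elim _ _; subst this; rfl
  rw [h0, h1]
  rw [show ((-1:K)^(((0:Fin 2)):ℕ)) = 1 by norm_num,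
      show ((-1:K)^(((1:Fin 2)):ℕ)) = -1 by norm_num,
      one_smul, neg_smul, one_smul, smul_add, smul_neg]
  erw [Finsupp.smul_single', Finsupp.smul_single']
  rw [mul_one, sub_eq_add_neg]


noncomputable def gg (K : Type) [Field K] (n : ℕ → ℕ) (a0 : Fin (n 0)) (b0 : Fin (n 1))
    (a : Fin (n 0)) (b : Fin (n 1)) : PChain K (MLPVertex 2 n) 2 :=
  Finsupp.single (PP n (a0, b0)) 1 - Finsupp.single (PP n (a0, b)) 1 -
    Finsupp.single (PP n (a, b0)) 1 + Finsupp.single (PP n (a, b)) 1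

lemma append_cst (x y : MLPVertex 2 n) :
    Fin.append (fun _ : Fin 1 => x) (fun _ : Fin 1 => y) = ![x, y] := by
  funext i; fin_cases i <;> rfl

lemma join_single (x y : MLPVertex 2 n) :
    pJoin K (MLPVertex 2 n) 1 1 (vertChain K (MLPVertex 2 n) x) (vertChain K (MLPVertex 2 n) y) =
      Finsupp.single ![x, y] (1 : K) := by
  show pJoin K (MLPVertex 2 n) 1 1 (Finsupp.single (fun _ => x) (1:K))
      (Finsupp.single (fun _ => y) (1:K)) = _
  simp only [pJoin]
  erw [Finsupp.lsum_single]
  rw [LinearMap.toSpanSingleton_apply_one]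
  erw [Finsupp.lsum_single]
  rw [LinearMap.toSpanSingleton_apply_one, append_cst]

lemma join_eq (a0 a : Fin (n 0)) (b0 b : Fin (n 1)) :
    pJoin K (MLPVertex 2 n) 1 1
      (vertChain K (MLPVertex 2 n) (uu n a0) - vertChain K (MLPVertex 2 n) (uu n a))
      (vertChain K (MLPVertex 2 n) (vv n b0) - vertChain K (MLPVertex 2 n) (vv n b)) =
      gg K n a0 b0 a b := by
  simp only [map_sub, LinearMap.sub_apply, join_single]
  rw [gg]
  show _ = Finsupp.single ![uu n a0, vv n b0] 1 - Finsupp.single ![uu n a0, vv n b] 1 -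
    Finsupp.single ![uu n a, vv n b0] 1 + Finsupp.single ![uu n a, vv n b] 1
  abel

lemma PP_allowed (p : Fin (n 0) × Fin (n 1)) :
    IsAllowed (MLPVertex 2 n) Set.univ (MLPEdge 2 n) 1 (PP n p) := by
  refine ⟨fun k => trivial, fun i => ?_⟩
  have hi : i = 0 := Subsingleton.elim _ _
  subst hi
  show MLPEdge 2 n (PP n p 0) (PP n p 1)
  rfl

lemma allowed_eq_range :
    {x : Fin 2 → MLPVertex 2 n | IsAllowed (MLPVertex 2 n) Set.univ (MLPEdge 2 n) 1 x} =
      Set.range (PP n) := by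
  ext x
  constructor
  · rintro ⟨-, he⟩
    have h : MLPEdge 2 n (x 0) (x 1) := he 0
    rcases hx0 : x 0 with ⟨⟨i, hi⟩, a⟩
    rcases hx1 : x 1 with ⟨⟨j, hj⟩, b⟩
    rw [hx0, hx1] at h
    have hji : j = i + 1 := h
    have hi0 : i = 0 := by omega
    have hj1 : j = 1 := by omega
    subst hi0; subst hj1
    refine ⟨(a, b), ?_⟩
    funext k
    fin_cases k
    · exact hx0.symm
    · exact hx1.symm
  · rintro ⟨p, rfl⟩; exact PP_allowed p

lemma bd_gg (a0 a : Fin (n 0)) (b0 b : Fin (n 1)) :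
    pBoundary K (MLPVertex 2 n) 1 (gg K n a0 b0 a b) = 0 := by
  rw [gg]
  erw [map_add, map_sub, map_sub]
  rw [bd_single, bd_single, bd_single, bd_single]
  simp only [PP_apply0, PP_apply1]
  abel

lemma allowedSub2_eq (E : MLPVertex 2 n → MLPVertex 2 n → Prop) :
    allowedSub K (MLPVertex 2 n) Set.univ E 2 =
      Finsupp.supported K K {x | IsAllowed (MLPVertex 2 n) Set.univ E 1 x} := rfl

lemma omegaSub2_eq (E : MLPVertex 2 n → MLPVertex 2 n → Prop) :
    omegaSub K (MLPVertex 2 n) Set.univ E 2 =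
      allowedSub K (MLPVertex 2 n) Set.univ E 2 ⊓
        Submodule.comap (pBoundary K (MLPVertex 2 n) 1)
          (allowedSub K (MLPVertex 2 n) Set.univ E 1) := rfl

lemma gg_mem (a0 a : Fin (n 0)) (b0 b : Fin (n 1)) :
    gg K n a0 b0 a b ∈ omegaSub K (MLPVertex 2 n) Set.univ (MLPEdge 2 n) 2 ⊓
      LinearMap.ker (pBoundary K (MLPVertex 2 n) 1) := by
  have hA : gg K n a0 b0 a b ∈ allowedSub K (MLPVertex 2 n) Set.univ (MLPEdge 2 n) 2 := by
    rw [allowedSub2_eq]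
    refine add_mem (sub_mem (sub_mem ?_ ?_) ?_) ?_ <;>
      exact Finsupp.single_mem_supported K 1 (PP_allowed _)
  refine Submodule.mem_inf.mpr ⟨?_, ?_⟩
  · rw [omegaSub2_eq]
    refine Submodule.mem_inf.mpr ⟨hA, Submodule.mem_comap.mpr ?_⟩
    rw [bd_gg]
    exact zero_mem _
  · exact LinearMap.mem_ker.mpr (bd_gg a0 a b0 b)


lemma PP_injective : Function.Injective (PP n) := fun _ _ h => PP_inj.mp h

@[simp] lemma vv_ne_uu (a : Fin (n 0)) (b : Fin (n 1)) : vv n b ≠ uu n a :=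
  (uu_ne_vv a b).symm

def toF (c : PChain K (MLPVertex 2 n) 2) : (Fin 2 → MLPVertex 2 n) →₀ K := c

lemma key_repr (c : PChain K (MLPVertex 2 n) 2)
    (hA : c ∈ allowedSub K (MLPVertex 2 n) Set.univ (MLPEdge 2 n) 2)
    (hker : pBoundary K (MLPVertex 2 n) 1 c = 0) (a0 : Fin (n 0)) (b0 : Fin (n 1)) :
    c = ∑ p : Fin (n 0) × Fin (n 1), toF c (PP n p) • gg K n a0 b0 p.1 p.2 := by
  classical
  set m : Fin (n 0) × Fin (n 1) → K := fun p => toF c (PP n p) with hm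
  have hA' : toF c ∈ Finsupp.supported K K (Set.range (PP n)) := by
    rw [allowedSub2_eq, allowed_eq_range] at hA
    exact hA
  have hrep : c = ∑ p : Fin (n 0) × Fin (n 1), Finsupp.single (PP n p) (m p) :=
    finsupp_repr (PP n) PP_injective (toF c) hA'
  have hbd : pBoundary K (MLPVertex 2 n) 1 c =
      ∑ p : Fin (n 0) × Fin (n 1),
        (Finsupp.single (fun _ : Fin 1 => vv n p.2) (m p) -
          Finsupp.single (fun _ : Fin 1 => uu n p.1) (m p)) := by
    conv_lhs => rw [hrep]
    erw [map_sum]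
    refine Finset.sum_congr rfl fun p _ => ?_
    rw [bd_single]
    simp only [PP_apply0, PP_apply1]
    rfl
  have hbd0 : (∑ p : Fin (n 0) × Fin (n 1),
        (Finsupp.single (fun _ : Fin 1 => vv n p.2) (m p) -
          Finsupp.single (fun _ : Fin 1 => uu n p.1) (m p))) = 0 := by
    rw [← hbd, hker]
    rfl
  have hcol : ∀ b : Fin (n 1), (∑ a : Fin (n 0), m (a, b)) = 0 := by
    intro b
    have h := DFunLike.congr_fun hbd0 (fun _ : Fin 1 => vv n b)
    rw [Finsupp.finset_sum_apply] at h
    simp only [Finsupp.sub_apply, Finsupp.single_apply, cst_inj, vv_inj, uu_ne_vv,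
      Finsupp.coe_zero, Pi.zero_apply, if_false, sub_zero] at h
    rw [Fintype.sum_prod_type] at h
    simpa [Finset.sum_ite_eq'] using h
  have hrow : ∀ a : Fin (n 0), (∑ b : Fin (n 1), m (a, b)) = 0 := by
    intro a
    have h := DFunLike.congr_fun hbd0 (fun _ : Fin 1 => uu n a)
    rw [Finsupp.finset_sum_apply] at h
    simp only [Finsupp.sub_apply, Finsupp.single_apply, cst_inj, uu_inj, vv_ne_uu,
      Finsupp.coe_zero, Pi.zero_apply, if_false, zero_sub, Finset.sum_neg_distrib,
      neg_eq_zero] at h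
    rw [Fintype.sum_prod_type_right] at h
    simpa [Finset.sum_ite_eq'] using h
  have h1 : (∑ p : Fin (n 0) × Fin (n 1),
      m p • (Finsupp.single (PP n (a0, b0)) (1:K) : PChain K (MLPVertex 2 n) 2)) = 0 := by
    rw [← Finset.sum_smul]
    have ht : (∑ p : Fin (n 0) × Fin (n 1), m p) = 0 := by
      rw [Fintype.sum_prod_type]
      exact Finset.sum_eq_zero fun a _ => hrow a
    rw [ht, zero_smul]
  have h2 : (∑ p : Fin (n 0) × Fin (n 1),
      m p • (Finsupp.single (PP n (a0, p.2)) (1:K) : PChain K (MLPVertex 2 n) 2)) = 0 := by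
    rw [Fintype.sum_prod_type_right]
    refine Finset.sum_eq_zero fun b _ => ?_
    have : (∑ a : Fin (n 0), m (a, b) •
        (Finsupp.single (PP n (a0, b)) (1:K) : PChain K (MLPVertex 2 n) 2)) = 0 := by
      rw [← Finset.sum_smul, hcol b, zero_smul]
    exact this
  have h3 : (∑ p : Fin (n 0) × Fin (n 1),
      m p • (Finsupp.single (PP n (p.1, b0)) (1:K) : PChain K (MLPVertex 2 n) 2)) = 0 := by
    rw [Fintype.sum_prod_type]
    refine Finset.sum_eq_zero fun a _ => ?_
    have : (∑ b : Fin (n 1), m (a, b) •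
        (Finsupp.single (PP n (a, b0)) (1:K) : PChain K (MLPVertex 2 n) 2)) = 0 := by
      rw [← Finset.sum_smul, hrow a, zero_smul]
    exact this
  have h4 : (∑ p : Fin (n 0) × Fin (n 1),
      m p • (Finsupp.single (PP n p) (1:K) : PChain K (MLPVertex 2 n) 2)) = c := by
    rw [hrep]
    refine Finset.sum_congr rfl fun p _ => ?_
    erw [Finsupp.smul_single']
    rw [mul_one]
  have expand : (∑ p : Fin (n 0) × Fin (n 1), m p • gg K n a0 b0 p.1 p.2) =
      (((∑ p : Fin (n 0) × Fin (n 1),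
          m p • (Finsupp.single (PP n (a0, b0)) (1:K) : PChain K (MLPVertex 2 n) 2)) -
        ∑ p : Fin (n 0) × Fin (n 1),
          m p • (Finsupp.single (PP n (a0, p.2)) (1:K) : PChain K (MLPVertex 2 n) 2)) -
        ∑ p : Fin (n 0) × Fin (n 1),
          m p • (Finsupp.single (PP n (p.1, b0)) (1:K) : PChain K (MLPVertex 2 n) 2)) +
        ∑ p : Fin (n 0) × Fin (n 1),
          m p • (Finsupp.single (PP n p) (1:K) : PChain K (MLPVertex 2 n) 2) := by
    rw [← Finset.sum_sub_distrib, ← Finset.sum_sub_distrib, ← Finset.sum_add_distrib]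
    refine Finset.sum_congr rfl fun p _ => ?_
    rw [gg]
    erw [smul_add, smul_sub, smul_sub]
    rfl
  rw [expand, h1, h2, h3, h4]
  abel


lemma gg_apply (a0 j' j : Fin (n 0)) (b0 k' k : Fin (n 1)) (hj : j ≠ a0) (hk : k ≠ b0) :
    toF (gg K n a0 b0 j' k') (PP n (j, k)) = if j' = j ∧ k' = k then 1 else 0 := by
  classical
  simp only [toF, gg]
  erw [Finsupp.add_apply, Finsupp.sub_apply, Finsupp.sub_apply]
  rw [Finsupp.single_apply, Finsupp.single_apply, Finsupp.single_apply, Finsupp.single_apply]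
  simp only [PP_inj, Prod.mk.injEq]
  rw [if_neg (fun h => hj h.1.symm), if_neg (fun h => hj h.1.symm),
    if_neg (fun h => hk h.2.symm)]
  simp

lemma smul_toF_apply (k : K) (c : PChain K (MLPVertex 2 n) 2) (x : Fin 2 → MLPVertex 2 n) :
    toF (k • c) x = k * toF c x := rfl

lemma gg_li (a0 : Fin (n 0)) (b0 : Fin (n 1)) :
    LinearIndependent K (fun q : {j : Fin (n 0) // j ≠ a0} × {k : Fin (n 1) // k ≠ b0} =>
      gg K n a0 b0 q.1.1 q.2.1) := by
  classical
  rw [Fintype.linearIndependent_iff]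
  intro g hg q
  have h0 : toF (∑ q' : {j : Fin (n 0) // j ≠ a0} × {k : Fin (n 1) // k ≠ b0},
      g q' • gg K n a0 b0 q'.1.1 q'.2.1) = toF 0 := congrArg toF hg
  simp only [toF] at h0
  have h := DFunLike.congr_fun h0 (PP n (q.1.1, q.2.1))
  erw [Finsupp.finset_sum_apply] at h
  have hsum : ∀ q' : {j : Fin (n 0) // j ≠ a0} × {k : Fin (n 1) // k ≠ b0},
      toF (g q' • gg K n a0 b0 q'.1.1 q'.2.1) (PP n (q.1.1, q.2.1)) =
        if q' = q then g q' else 0 := by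
    intro q'
    rw [smul_toF_apply, gg_apply a0 q'.1.1 q.1.1 b0 q'.2.1 q.2.1 q.1.2 q.2.2]
    by_cases hq : q' = q
    · subst hq; simp
    · rw [if_neg (fun hc => hq (Prod.ext (Subtype.ext hc.1) (Subtype.ext hc.2))),
        if_neg hq, mul_zero]
  have h2 := (Finset.sum_congr rfl fun q' _ => hsum q').symm.trans h
  simpa [Finset.sum_ite_eq'] using h2.trans (rfl : _ = (0:K))

lemma gg_zero_left (a0 : Fin (n 0)) (b0 b : Fin (n 1)) : gg K n a0 b0 a0 b = 0 := by
  rw [gg]; abel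

lemma gg_zero_right (a0 a : Fin (n 0)) (b0 : Fin (n 1)) : gg K n a0 b0 a b0 = 0 := by
  rw [gg]; abel

end MLPAux

open MLPAux in
/-- For a two-layer MLP with first-layer vertices `u_a = ⟨0, a⟩`,
`a : Fin (n 0)`, and second-layer vertices `v_b = ⟨1, b⟩`, `b : Fin (n 1)`, the kernel of
`∂_1|_{Ω_1(G_2)}` is spanned by the elements `(u_1 - u_j)(v_1 - v_k)` for `j ≠ 0`, `k ≠ 0`
(with `u_1 = ⟨0,0⟩`, `v_1 = ⟨1,0⟩`), and has dimension `(n 0 - 1) * (n 1 - 1)`. -/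
theorem mlp_two_layer_kernel (K : Type) [Field K] (n : ℕ → ℕ) (hn : ∀ i, 1 ≤ n i) :
    (omegaSub K (MLPVertex 2 n) Set.univ (MLPEdge 2 n) 2 ⊓
        LinearMap.ker (pBoundary K (MLPVertex 2 n) 1) =
      Submodule.span K {x : PChain K (MLPVertex 2 n) 2 |
        ∃ (j : Fin (n 0)) (k : Fin (n 1)), j ≠ ⟨0, hn 0⟩ ∧ k ≠ ⟨0, hn 1⟩ ∧
          x = pJoin K (MLPVertex 2 n) 1 1
            (vertChain K (MLPVertex 2 n) ⟨⟨0, by omega⟩, ⟨0, hn 0⟩⟩ -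
              vertChain K (MLPVertex 2 n) ⟨⟨0, by omega⟩, j⟩)
            (vertChain K (MLPVertex 2 n) ⟨⟨1, by omega⟩, ⟨0, hn 1⟩⟩ -
              vertChain K (MLPVertex 2 n) ⟨⟨1, by omega⟩, k⟩)}) ∧
    Module.rank K
      ↥(omegaSub K (MLPVertex 2 n) Set.univ (MLPEdge 2 n) 2 ⊓
          LinearMap.ker (pBoundary K (MLPVertex 2 n) 1)) =
      (((n 0 - 1) * (n 1 - 1) : ℕ) : Cardinal) := by
  classical
  have hset : {x : PChain K (MLPVertex 2 n) 2 |
        ∃ (j : Fin (n 0)) (k : Fin (n 1)), j ≠ ⟨0, hn 0⟩ ∧ k ≠ ⟨0, hn 1⟩ ∧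
          x = pJoin K (MLPVertex 2 n) 1 1
            (vertChain K (MLPVertex 2 n) ⟨⟨0, by omega⟩, ⟨0, hn 0⟩⟩ -
              vertChain K (MLPVertex 2 n) ⟨⟨0, by omega⟩, j⟩)
            (vertChain K (MLPVertex 2 n) ⟨⟨1, by omega⟩, ⟨0, hn 1⟩⟩ -
              vertChain K (MLPVertex 2 n) ⟨⟨1, by omega⟩, k⟩)} =
      Set.range (fun q : {j : Fin (n 0) // j ≠ ⟨0, hn 0⟩} × {k : Fin (n 1) // k ≠ ⟨0, hn 1⟩} =>
        gg K n ⟨0, hn 0⟩ ⟨0, hn 1⟩ q.1.1 q.2.1) := by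
    ext x
    simp only [Set.mem_setOf_eq, Set.mem_range]
    constructor
    · rintro ⟨j, k, hj, hk, rfl⟩
      exact ⟨(⟨j, hj⟩, ⟨k, hk⟩), (join_eq ⟨0, hn 0⟩ j ⟨0, hn 1⟩ k).symm⟩
    · rintro ⟨q, rfl⟩
      exact ⟨q.1.1, q.2.1, q.1.2, q.2.2, (join_eq ⟨0, hn 0⟩ q.1.1 ⟨0, hn 1⟩ q.2.1).symm⟩
  have hspan : omegaSub K (MLPVertex 2 n) Set.univ (MLPEdge 2 n) 2 ⊓
        LinearMap.ker (pBoundary K (MLPVertex 2 n) 1) =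
      Submodule.span K (Set.range
        (fun q : {j : Fin (n 0) // j ≠ ⟨0, hn 0⟩} × {k : Fin (n 1) // k ≠ ⟨0, hn 1⟩} =>
          gg K n ⟨0, hn 0⟩ ⟨0, hn 1⟩ q.1.1 q.2.1)) := by
    apply le_antisymm
    · intro c hc
      obtain ⟨hΩ, hk⟩ := Submodule.mem_inf.mp hc
      have hA : c ∈ allowedSub K (MLPVertex 2 n) Set.univ (MLPEdge 2 n) 2 :=
        (Submodule.mem_inf.mp ((omegaSub2_eq (K := K) (n := n) (MLPEdge 2 n)) ▸ hΩ)).1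
      have hkk : pBoundary K (MLPVertex 2 n) 1 c = 0 := hk
      rw [key_repr c hA hkk ⟨0, hn 0⟩ ⟨0, hn 1⟩]
      refine Submodule.sum_mem _ fun p _ => Submodule.smul_mem _ _ ?_
      by_cases h1 : p.1 = ⟨0, hn 0⟩
      · rw [h1, gg_zero_left]; exact zero_mem _
      by_cases h2 : p.2 = ⟨0, hn 1⟩
      · rw [h2, gg_zero_right]; exact zero_mem _
      · exact Submodule.subset_span ⟨(⟨p.1, h1⟩, ⟨p.2, h2⟩), rfl⟩
    · rw [Submodule.span_le]
      rintro x ⟨q, rfl⟩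
      exact gg_mem ⟨0, hn 0⟩ q.1.1 ⟨0, hn 1⟩ q.2.1
  constructor
  · rw [hspan, hset]
  · rw [hspan, rank_span (gg_li ⟨0, hn 0⟩ ⟨0, hn 1⟩),
      Cardinal.mk_range_eq _ (gg_li ⟨0, hn 0⟩ ⟨0, hn 1⟩).injective,
      Cardinal.mk_fintype, Fintype.card_prod]
    congr 1
    have c1 : Fintype.card {j : Fin (n 0) // j ≠ ⟨0, hn 0⟩} = n 0 - 1 := by
      simp [Fintype.card_subtype_compl]
    have c2 : Fintype.card {k : Fin (n 1) // k ≠ ⟨0, hn 1⟩} = n 1 - 1 := by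
      simp [Fintype.card_subtype_compl]
    rw [c1, c2]
end

section
/- Let G_L be the MLP digraph with L layers of widths n_1, …, n_L. Then for every integer j with 0 ≤ j ≤ L−2, ker(∂_j|_{Ω_j(G_L)}) = im(∂_{j+1}|_{Ω_{j+1}(G_L)}). In particular, the reduced path homology H_j^Ξ(G_L) vanishes for 0 ≤ j ≤ L−2. -/
open Finsupp Submodule LinearMap

variable (K : Type) [Field K] (X : Type)

namespace MLPAux
variable (K : Type) [Field K] (X : Type)

/-- The boundary map on raw finsupp types. -/
noncomputable def dB (p : ℕ) : ((Fin (p+2) → X) →₀ K) →ₗ[K] ((Fin (p+1) → X) →₀ K) :=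
  Finsupp.lsum K fun x => LinearMap.toSpanSingleton K _
    (∑ i : Fin (p + 2), ((-1 : K) ^ (i : ℕ)) • Finsupp.single (x ∘ i.succAbove) (1 : K))

noncomputable def aug : ((Fin 1 → X) →₀ K) →ₗ[K] K := Finsupp.lsum K fun _ => LinearMap.id

lemma dB_eq (p : ℕ) : pBoundary K X (p+1) = dB K X p := rfl

lemma aug_eq : pBoundary K X 0 = aug K X := rfl

lemma dB_single (p : ℕ) (x : Fin (p+2) → X) (c : K) :
    dB K X p (Finsupp.single x c) =
      c • (∑ i : Fin (p + 2), ((-1 : K) ^ (i : ℕ)) • Finsupp.single (x ∘ i.succAbove) (1 : K)) := by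
  rw [dB, Finsupp.lsum_single, LinearMap.toSpanSingleton_apply]

lemma aug_single (x : Fin 1 → X) (c : K) : aug K X (Finsupp.single x c) = c := by
  rw [aug, Finsupp.lsum_single]; rfl

noncomputable def consL (p : ℕ) (v : X) :
    ((Fin (p+1) → X) →₀ K) →ₗ[K] ((Fin (p+2) → X) →₀ K) :=
  Finsupp.lmapDomain K K (fun x => Fin.cons v x)

noncomputable def snocL (p : ℕ) (w : X) :
    ((Fin (p+1) → X) →₀ K) →ₗ[K] ((Fin (p+2) → X) →₀ K) :=
  Finsupp.lmapDomain K K (fun x => Fin.snoc x w)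

lemma consL_single (p : ℕ) (v : X) (x : Fin (p+1) → X) (c : K) :
    consL K X p v (Finsupp.single x c) = Finsupp.single (Fin.cons v x) c := by
  rw [consL, Finsupp.lmapDomain_apply, Finsupp.mapDomain_single]

lemma snocL_single (p : ℕ) (w : X) (x : Fin (p+1) → X) (c : K) :
    snocL K X p w (Finsupp.single x c) = Finsupp.single (Fin.snoc x w) c := by
  rw [snocL, Finsupp.lmapDomain_apply, Finsupp.mapDomain_single]

variable {X}

lemma cons_comp_zero (p : ℕ) (v : X) (x : Fin (p+1) → X) :
    (Fin.cons v x : Fin (p+2) → X) ∘ (0 : Fin (p+2)).succAbove = x := by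
  funext k; simp [Fin.zero_succAbove]

lemma cons_comp_succ (p : ℕ) (v : X) (x : Fin (p+1) → X) (i : Fin (p+1)) :
    (Fin.cons v x : Fin (p+2) → X) ∘ (i.succ).succAbove = Fin.cons v (x ∘ i.succAbove) := by
  funext k
  induction k using Fin.cases with
  | zero => simp [Fin.succ_succAbove_zero]
  | succ m => simp [Fin.succ_succAbove_succ]

lemma snoc_comp_last (p : ℕ) (w : X) (x : Fin (p+1) → X) :
    (Fin.snoc x w : Fin (p+2) → X) ∘ (Fin.last (p+1)).succAbove = x := by
  funext k; simp [Fin.succAbove_last]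

lemma snoc_comp_castSucc (p : ℕ) (w : X) (x : Fin (p+2) → X) (i : Fin (p+2)) :
    (Fin.snoc x w : Fin (p+3) → X) ∘ (i.castSucc).succAbove = Fin.snoc (x ∘ i.succAbove) w := by
  funext k
  induction k using Fin.lastCases with
  | last =>
      have h1 : (i.castSucc).succAbove (Fin.last (p+1)) = Fin.last (p+2) := by
        rw [Fin.succAbove_of_le_castSucc _ _ (by simp [Fin.castSucc_le_castSucc_iff, Fin.le_last])]
        exact Fin.succ_last (p+1)
      simp [h1]
  | cast m => simp [Fin.castSucc_succAbove_castSucc]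


lemma dB_cons (p : ℕ) (v : X) :
    (dB K X (p+1)).comp (consL K X (p+1) v) =
      LinearMap.id - (consL K X p v).comp (dB K X p) := by
  apply Finsupp.lhom_ext; intro x c
  rw [LinearMap.comp_apply, consL_single, dB_single, Fin.sum_univ_succ, cons_comp_zero,
    LinearMap.sub_apply, LinearMap.id_apply, LinearMap.comp_apply, dB_single, map_smul, map_sum]
  simp only [consL_single, cons_comp_succ, Fin.val_succ, Fin.val_zero, pow_zero, one_smul,
    pow_succ, mul_neg_one, neg_smul, smul_add, Finsupp.smul_single, smul_neg, Finset.smul_sum,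
    smul_smul, mul_one, sub_eq_add_neg, neg_neg, Finset.sum_neg_distrib]
  simp


lemma funext1 {f g : Fin 1 → X} (h : f 0 = g 0) : f = g :=
  funext fun k => by rw [Subsingleton.elim k 0]; exact h

lemma dB_cons0 (v : X) :
    (dB K X 0).comp (consL K X 0 v) =
      LinearMap.id - (LinearMap.toSpanSingleton K _
        (Finsupp.single (fun _ => v : Fin 1 → X) (1:K))).comp (aug K X) := by
  apply Finsupp.lhom_ext; intro x c
  have h1 : (Fin.cons v x : Fin 2 → X) ∘ (1 : Fin 2).succAbove = (fun _ => v) :=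
    funext1 rfl
  rw [LinearMap.comp_apply, consL_single, dB_single, Fin.sum_univ_two, cons_comp_zero _ v x,
    LinearMap.sub_apply, LinearMap.id_apply, LinearMap.comp_apply, aug_single,
    LinearMap.toSpanSingleton_apply, h1]
  simp [sub_eq_add_neg, Finsupp.smul_single]

lemma dB_snoc (p : ℕ) (w : X) :
    (dB K X (p+1)).comp (snocL K X (p+1) w) =
      (snocL K X p w).comp (dB K X p) + ((-1:K)^(p+2)) • LinearMap.id := by
  apply Finsupp.lhom_ext; intro x c
  rw [LinearMap.comp_apply, snocL_single, dB_single, Fin.sum_univ_castSucc, snoc_comp_last,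
    LinearMap.add_apply, LinearMap.smul_apply, LinearMap.id_apply,
    LinearMap.comp_apply, dB_single, map_smul, map_sum]
  simp only [snocL_single, snoc_comp_castSucc, Fin.coe_castSucc, Fin.val_last,
    smul_add, Finsupp.smul_single, smul_smul, mul_one, Finset.smul_sum, smul_eq_mul, mul_comm]
  simp [mul_comm]

lemma dB_snoc0 (w : X) :
    (dB K X 0).comp (snocL K X 0 w) =
      (LinearMap.toSpanSingleton K _
        (Finsupp.single (fun _ => w : Fin 1 → X) (1:K))).comp (aug K X) - LinearMap.id := by
  apply Finsupp.lhom_ext; intro x c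
  have h0 : (Fin.snoc x w : Fin 2 → X) ∘ (0 : Fin 2).succAbove = (fun _ => w) :=
    funext1 rfl
  have h1 : (Fin.snoc x w : Fin 2 → X) ∘ (1 : Fin 2).succAbove = x :=
    funext1 rfl
  rw [LinearMap.comp_apply, snocL_single, dB_single, Fin.sum_univ_two, h0, h1,
    LinearMap.sub_apply, LinearMap.id_apply, LinearMap.comp_apply, aug_single,
    LinearMap.toSpanSingleton_apply]
  simp [sub_eq_add_neg, Finsupp.smul_single]

lemma dd0 : (aug K X).comp (dB K X 0) = 0 := by
  apply Finsupp.lhom_ext; intro x c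
  rw [LinearMap.comp_apply, dB_single, map_smul, map_sum]
  simp [aug_single, Fin.sum_univ_two]

lemma dd : ∀ p, (dB K X p).comp (dB K X (p+1)) = 0 := by
  intro p
  induction p with
  | zero =>
    apply Finsupp.lhom_ext; intro x c
    rw [LinearMap.comp_apply, LinearMap.zero_apply, ← Fin.cons_self_tail x, ← consL_single,
      ← LinearMap.comp_apply (dB K X 1), dB_cons, LinearMap.sub_apply, LinearMap.id_apply,
      LinearMap.comp_apply, map_sub, ← LinearMap.comp_apply (dB K X 0) (consL K X 0 _),
      dB_cons0, LinearMap.sub_apply, LinearMap.id_apply, LinearMap.comp_apply,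
      ← LinearMap.comp_apply (aug K X), dd0]
    simp
  | succ p ih =>
    apply Finsupp.lhom_ext; intro x c
    rw [LinearMap.comp_apply, LinearMap.zero_apply, ← Fin.cons_self_tail x, ← consL_single,
      ← LinearMap.comp_apply (dB K X (p+2)), dB_cons, LinearMap.sub_apply, LinearMap.id_apply,
      LinearMap.comp_apply, map_sub, ← LinearMap.comp_apply (dB K X (p+1)) (consL K X (p+1) _),
      dB_cons, LinearMap.sub_apply, LinearMap.id_apply, LinearMap.comp_apply,
      ← LinearMap.comp_apply (dB K X p), ih]
    simp


lemma supp_dB (p : ℕ) (c : (Fin (p+2) → X) →₀ K) {y : Fin (p+1) → X}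
    (hy : y ∈ (dB K X p c).support) :
    ∃ x ∈ c.support, ∃ i : Fin (p+2), y = x ∘ i.succAbove := by
  classical
  rw [dB, Finsupp.lsum_apply] at hy
  have h1 := Finsupp.support_sum hy
  rw [Finset.mem_biUnion] at h1
  obtain ⟨x, hx, hy2⟩ := h1
  rw [LinearMap.toSpanSingleton_apply] at hy2
  have hy3 := Finsupp.support_smul hy2
  have hy4 := Finsupp.support_finset_sum hy3
  rw [Finset.mem_biUnion] at hy4
  obtain ⟨i, _, hy5⟩ := hy4
  have hy6 := Finsupp.support_smul hy5
  have hy7 := Finsupp.support_single_subset hy6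
  rw [Finset.mem_singleton] at hy7
  exact ⟨x, hx, i, hy7⟩

end MLPAux

namespace MLPAux
section MLP
variable (K : Type) [Field K] {L : ℕ} {n : ℕ → ℕ}

def lyr (v : MLPVertex L n) : ℕ := v.1

lemma lyr_lt (v : MLPVertex L n) : lyr v < L := v.1.isLt

def Adm (p : ℕ) (x : Fin (p+1) → MLPVertex L n) : Prop :=
  ∀ i : Fin p, lyr (x i.succ) = lyr (x i.castSucc) + 1

lemma adm_iff (p : ℕ) (x : Fin (p+1) → MLPVertex L n) :
    IsAllowed (MLPVertex L n) Set.univ (MLPEdge L n) p x ↔ Adm p x :=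
  ⟨fun h => h.2, fun h => ⟨fun _ => Set.mem_univ _, h⟩⟩

lemma adm_layer {p : ℕ} {x : Fin (p+1) → MLPVertex L n} (h : Adm p x) :
    ∀ k : Fin (p+1), lyr (x k) = lyr (x 0) + k := by
  intro k
  induction k using Fin.induction with
  | zero => simp
  | succ m ihm =>
      have h1 := h m
      rw [h1, ihm]
      simp
      omega

lemma adm_bound {p : ℕ} {x : Fin (p+1) → MLPVertex L n} (h : Adm p x) :
    lyr (x 0) + p < L := by
  have h1 := adm_layer h (Fin.last p)
  have h2 := lyr_lt (x (Fin.last p))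
  rw [Fin.val_last] at h1
  omega

def pex (hn : ∀ i, 1 ≤ n i) (i : ℕ) (h : i < L) : MLPVertex L n := ⟨⟨i, h⟩, ⟨0, hn _⟩⟩

lemma lyr_pex (hn : ∀ i, 1 ≤ n i) (i : ℕ) (h : i < L) : lyr (pex hn i h) = i := rfl

lemma adm_tail {p : ℕ} {x : Fin (p+2) → MLPVertex L n} (h : Adm (p+1) x) :
    Adm p (x ∘ Fin.succ) := by
  intro i
  have h1 := h i.succ
  show lyr (x i.succ.succ) = lyr (x (i.castSucc.succ)) + 1
  rwa [Fin.succ_castSucc]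

lemma adm_cons {p : ℕ} {v : MLPVertex L n} {x : Fin (p+1) → MLPVertex L n}
    (h : Adm p x) (h2 : lyr (x 0) = lyr v + 1) : Adm (p+1) (Fin.cons v x) := by
  intro i
  induction i using Fin.cases with
  | zero =>
      rw [Fin.cons_succ, Fin.castSucc_zero, Fin.cons_zero]
      exact h2
  | succ m =>
      rw [← Fin.succ_castSucc, Fin.cons_succ, Fin.cons_succ]
      exact h m

lemma adm_snoc {p : ℕ} {w : MLPVertex L n} {x : Fin (p+1) → MLPVertex L n}
    (h : Adm p x) (h2 : lyr w = lyr (x 0) + p + 1) : Adm (p+1) (Fin.snoc x w) := by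
  intro i
  induction i using Fin.lastCases with
  | last =>
      rw [Fin.succ_last, Fin.snoc_last, Fin.snoc_castSucc]
      have h3 := adm_layer h (Fin.last p)
      rw [Fin.val_last] at h3
      omega
  | cast m =>
      rw [Fin.succ_castSucc, Fin.snoc_castSucc, Fin.snoc_castSucc]
      exact h m

lemma snoc_zero' {p : ℕ} (x : Fin (p+1) → MLPVertex L n) (w : MLPVertex L n) :
    (Fin.snoc x w : Fin (p+2) → MLPVertex L n) 0 = x 0 := by
  show (Fin.snoc x w : Fin (p+2) → MLPVertex L n) (Fin.castSucc 0) = x 0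
  rw [Fin.snoc_castSucc]

lemma main_pos (hn : ∀ i, 1 ≤ n i) (q : ℕ) (hq : q + 3 ≤ L) :
    ∀ d : ℕ, ∀ z : (Fin (q+2) → MLPVertex L n) →₀ K,
      (∀ x ∈ z.support, Adm (q+1) x) → dB K (MLPVertex L n) q z = 0 →
      (∀ x ∈ z.support, L - 2 - q ≤ lyr (x 0) + d) →
      ∃ h : (Fin (q+3) → MLPVertex L n) →₀ K,
        (∀ x ∈ h.support, Adm (q+2) x) ∧ dB K (MLPVertex L n) (q+1) h = z := by
  classical
  intro d
  induction d with
  | zero =>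
      intro z hadm hcyc hlay
      have hvlt : L - 3 - q < L := by omega
      refine ⟨consL K (MLPVertex L n) (q+1) (pex hn (L-3-q) hvlt) z, ?_, ?_⟩
      · intro x hx
        rw [consL, Finsupp.lmapDomain_apply] at hx
        obtain ⟨x', hx', rfl⟩ := Finset.mem_image.mp (Finsupp.mapDomain_support hx)
        have h1 := adm_bound (hadm x' hx')
        have h2 := hlay x' hx'
        exact adm_cons (hadm x' hx') (by rw [lyr_pex]; omega)
      · have hc := congrArg (fun F => F z) (dB_cons K q (pex hn (L-3-q) hvlt))
        simp only [LinearMap.comp_apply, LinearMap.sub_apply, LinearMap.id_apply] at hc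
        rw [hc, hcyc, map_zero, sub_zero]
  | succ d ih =>
      intro z hadm hcyc hlay
      by_cases hLd : L - 2 - q ≤ d
      · exact ih z hadm hcyc fun x hx => by omega
      classical
      have hs1 : (L - 3 - q - d) + (d + 1) = L - 2 - q := by omega
      set s := L - 3 - q - d with hs
      have hwlt : s + q + 2 < L := by omega
      set w := pex hn (s + q + 2) hwlt with hw
      set a := z.filter (fun x => lyr (x 0) = s) with ha
      set b := z.filter (fun x => ¬ lyr (x 0) = s) with hb
      have hab : a + b = z := Finsupp.filter_pos_add_filter_neg z _
      have hsupa : ∀ x ∈ a.support, x ∈ z.support ∧ lyr (x 0) = s := by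
        intro x hx; rw [ha, Finsupp.support_filter, Finset.mem_filter] at hx; exact hx
      have hsupb : ∀ x ∈ b.support, x ∈ z.support ∧ s + 1 ≤ lyr (x 0) := by
        intro x hx; rw [hb, Finsupp.support_filter, Finset.mem_filter] at hx
        refine ⟨hx.1, ?_⟩
        have h1 := hlay x hx.1
        have h2 := hx.2
        omega
      have hclaim : ∀ y ∈ (dB K (MLPVertex L n) q a).support, Adm q y ∧ lyr (y 0) = s + 1 := by
        intro y hy
        have hneg : dB K (MLPVertex L n) q a = - dB K (MLPVertex L n) q b := by
          refine eq_neg_of_add_eq_zero_left ?_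
          rw [← map_add, hab]; exact hcyc
        have hyb : y ∈ (dB K (MLPVertex L n) q b).support := by
          rw [hneg, Finsupp.support_neg] at hy; exact hy
        obtain ⟨x', hx', hy'⟩ := supp_dB K q b hyb
        obtain ⟨i', hy'⟩ := hy'
        have hgb := hsupb x' hx'
        have hadm' := hadm x' hgb.1
        have hge : s + 1 ≤ lyr (y 0) := by
          rw [hy']
          simp only [Function.comp_apply]
          have h3 := adm_layer hadm' (i'.succAbove 0)
          omega
        obtain ⟨x, hx, hyx⟩ := supp_dB K q a hy
        obtain ⟨i, hyx⟩ := hyx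
        have hxa := hsupa x hx
        have hadmx := hadm x hxa.1
        rcases eq_or_ne i 0 with h0 | h0
        · subst h0
          have hty : y = x ∘ Fin.succ := by
            rw [hyx]; exact congrArg (x ∘ ·) (funext fun k => Fin.zero_succAbove k)
          refine ⟨by rw [hty]; exact adm_tail hadmx, ?_⟩
          rw [hty]
          have h5 := hadmx 0
          rw [Fin.castSucc_zero] at h5
          show lyr (x (Fin.succ 0)) = s + 1
          omega
        · exfalso
          have h6 : y 0 = x 0 := by
            rw [hyx]
            show x (i.succAbove 0) = x 0
            rw [Fin.succAbove_ne_zero_zero h0]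
          rw [h6] at hge
          omega
      set ε : K := (-1:K)^(q+2) with he
      have hee : ε * ε = 1 := by rw [he, ← pow_add]; exact Even.neg_one_pow ⟨q+2, rfl⟩
      set h₁ := ε • snocL K (MLPVertex L n) (q+1) w a with hh₁
      have hsn := congrArg (fun F => F a) (dB_snoc K q w)
      simp only [LinearMap.comp_apply, LinearMap.add_apply, LinearMap.smul_apply,
        LinearMap.id_apply] at hsn
      have hdh₁ : dB K (MLPVertex L n) (q+1) h₁
          = ε • snocL K (MLPVertex L n) q w (dB K (MLPVertex L n) q a) + a := by
        rw [hh₁, map_smul, hsn, smul_add, smul_smul, hee, one_smul]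
      set z' := z - dB K (MLPVertex L n) (q+1) h₁ with hz'
      have hz'' : z' = b - ε • snocL K (MLPVertex L n) q w (dB K (MLPVertex L n) q a) := by
        rw [hz', hdh₁, ← hab]; abel
      have hcyc' : dB K (MLPVertex L n) q z' = 0 := by
        rw [hz', map_sub, hcyc, ← LinearMap.comp_apply, dd, LinearMap.zero_apply, sub_zero]
      have hadm' : ∀ x ∈ z'.support, Adm (q+1) x ∧ s + 1 ≤ lyr (x 0) := by
        intro x hx
        rw [hz''] at hx
        rcases Finset.mem_union.mp (Finsupp.support_sub hx) with hxb | hxs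
        · exact ⟨hadm x (hsupb x hxb).1, (hsupb x hxb).2⟩
        · have hx3 := Finsupp.support_smul hxs
          rw [snocL, Finsupp.lmapDomain_apply] at hx3
          obtain ⟨y, hy, rfl⟩ := Finset.mem_image.mp (Finsupp.mapDomain_support hx3)
          obtain ⟨hy1, hy2⟩ := hclaim y hy
          refine ⟨adm_snoc hy1 (by rw [lyr_pex]; omega), ?_⟩
          rw [snoc_zero']
          omega
      obtain ⟨h₂, hh₂a, hh₂d⟩ := ih z' (fun x hx => (hadm' x hx).1) hcyc'
        (fun x hx => by have := (hadm' x hx).2; omega)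
      refine ⟨h₁ + h₂, ?_, ?_⟩
      · intro x hx
        rcases Finset.mem_union.mp (Finsupp.support_add hx) with hx1 | hx2
        · have hx3 := Finsupp.support_smul hx1
          rw [snocL, Finsupp.lmapDomain_apply] at hx3
          obtain ⟨x', hx', rfl⟩ := Finset.mem_image.mp (Finsupp.mapDomain_support hx3)
          refine adm_snoc (hadm x' (hsupa x' hx').1) ?_
          rw [lyr_pex]
          have := (hsupa x' hx').2
          omega
        · exact hh₂a x hx2
      · rw [map_add, hh₂d, hz']; abel

lemma main_zero (hn : ∀ i, 1 ≤ n i) (hL : 2 ≤ L) :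
    ∀ d : ℕ, ∀ z : (Fin 1 → MLPVertex L n) →₀ K,
      aug K (MLPVertex L n) z = 0 →
      (∀ x ∈ z.support, L - 1 ≤ lyr (x 0) + d) →
      ∃ h : (Fin 2 → MLPVertex L n) →₀ K,
        (∀ x ∈ h.support, Adm 1 x) ∧ dB K (MLPVertex L n) 0 h = z := by
  classical
  intro d
  induction d with
  | zero =>
      intro z hcyc hlay
      have hvlt : L - 2 < L := by omega
      refine ⟨consL K (MLPVertex L n) 0 (pex hn (L-2) hvlt) z, ?_, ?_⟩
      · intro x hx
        rw [consL, Finsupp.lmapDomain_apply] at hx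
        obtain ⟨x', hx', rfl⟩ := Finset.mem_image.mp (Finsupp.mapDomain_support hx)
        have h2 := hlay x' hx'
        have h3 := lyr_lt (x' 0)
        refine adm_cons (fun i => i.elim0) ?_
        rw [lyr_pex]; omega
      · have hc := congrArg (fun F => F z) (dB_cons0 K (pex hn (L-2) hvlt))
        simp only [LinearMap.comp_apply, LinearMap.sub_apply, LinearMap.id_apply] at hc
        rw [hc, hcyc, map_zero, sub_zero]
  | succ d ih =>
      intro z hcyc hlay
      by_cases hLd : L - 1 ≤ d
      · exact ih z hcyc fun x hx => by omega
      classical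
      have hs1 : (L - 2 - d) + (d + 1) = L - 1 := by omega
      set s := L - 2 - d with hs
      have hwlt : s + 1 < L := by omega
      set w := pex hn (s+1) hwlt with hw
      set a := z.filter (fun x => lyr (x 0) = s) with ha
      set b := z.filter (fun x => ¬ lyr (x 0) = s) with hb
      have hab : a + b = z := Finsupp.filter_pos_add_filter_neg z _
      have hsupa : ∀ x ∈ a.support, lyr (x 0) = s := by
        intro x hx; rw [ha, Finsupp.support_filter, Finset.mem_filter] at hx; exact hx.2
      have hsupb : ∀ x ∈ b.support, x ∈ z.support ∧ s + 1 ≤ lyr (x 0) := by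
        intro x hx; rw [hb, Finsupp.support_filter, Finset.mem_filter] at hx
        refine ⟨hx.1, ?_⟩
        have h1 := hlay x hx.1
        have h2 := hx.2
        omega
      set h₁ := - snocL K (MLPVertex L n) 0 w a with hh₁
      have hsn := congrArg (fun F => F a) (dB_snoc0 K w)
      simp only [LinearMap.comp_apply, LinearMap.sub_apply, LinearMap.id_apply,
        LinearMap.toSpanSingleton_apply] at hsn
      have hdh₁ : dB K (MLPVertex L n) 0 h₁
          = a - (aug K (MLPVertex L n) a) • Finsupp.single (fun _ => w : Fin 1 → MLPVertex L n) (1:K) := by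
        rw [hh₁, map_neg, hsn]; abel
      set z' := z - dB K (MLPVertex L n) 0 h₁ with hz'
      have hz'' : z' = b + (aug K (MLPVertex L n) a) • Finsupp.single (fun _ => w : Fin 1 → MLPVertex L n) (1:K) := by
        rw [hz', hdh₁, ← hab]; abel
      have hcyc' : aug K (MLPVertex L n) z' = 0 := by
        rw [hz', map_sub, hcyc, ← LinearMap.comp_apply, dd0, LinearMap.zero_apply, sub_zero]
      have hlay' : ∀ x ∈ z'.support, L - 1 ≤ lyr (x 0) + d := by
        intro x hx
        rw [hz''] at hx
        rcases Finset.mem_union.mp (Finsupp.support_add hx) with hx1 | hx2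
        · have := (hsupb x hx1).2; omega
        · have hx3 := Finsupp.support_smul hx2
          have hx4 := Finsupp.support_single_subset hx3
          rw [Finset.mem_singleton] at hx4
          subst hx4
          have hwl : lyr ((fun _ : Fin 1 => w) 0) = s + 1 := lyr_pex hn (s+1) hwlt
          omega
      obtain ⟨h₂, hh₂a, hh₂d⟩ := ih z' hcyc' hlay'
      refine ⟨h₁ + h₂, ?_, ?_⟩
      · intro x hx
        rcases Finset.mem_union.mp (Finsupp.support_add hx) with hx1 | hx2
        · rw [hh₁, Finsupp.support_neg, snocL, Finsupp.lmapDomain_apply] at hx1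
          obtain ⟨x', hx', rfl⟩ := Finset.mem_image.mp (Finsupp.mapDomain_support hx1)
          refine adm_snoc (fun i => i.elim0) ?_
          rw [lyr_pex]
          have := hsupa x' hx'
          omega
        · exact hh₂a x hx2
      · rw [map_add, hh₂d, hz']; abel

end MLP
end MLPAux

open MLPAux

/-- For the MLP digraph with `L` layers and every `j` with `0 ≤ j ≤ L - 2`,
the `∂`-invariant `j`-cycles coincide with the boundaries of `∂`-invariant `(j+1)`-paths;
in particular the reduced path homology vanishes in degree `j`. -/
theorem mlp_hom_vanish (K : Type) [Field K] (L : ℕ) (n : ℕ → ℕ) (hn : ∀ i, 1 ≤ n i)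
    (j : ℕ) (hj : j + 2 ≤ L) :
    (omegaSub K (MLPVertex L n) Set.univ (MLPEdge L n) (j + 1) ⊓
        LinearMap.ker (pBoundary K (MLPVertex L n) j) =
      Submodule.map (pBoundary K (MLPVertex L n) (j + 1))
        (omegaSub K (MLPVertex L n) Set.univ (MLPEdge L n) (j + 2))) ∧
    pathHomRank K (MLPVertex L n) Set.univ (MLPEdge L n) j = 0 := by
  classical
  have hdd : ∀ (c : PChain K (MLPVertex L n) (j+2)),
      pBoundary K (MLPVertex L n) j (pBoundary K (MLPVertex L n) (j+1) c) = 0 := by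
    intro c
    cases j with
    | zero =>
        rw [aug_eq, dB_eq]
        have h0 := LinearMap.congr_fun (dd0 K (X := MLPVertex L n)) c
        exact h0
    | succ q =>
        rw [dB_eq, dB_eq]
        have h0 := LinearMap.congr_fun (dd K (X := MLPVertex L n) q) c
        exact h0
  have key : omegaSub K (MLPVertex L n) Set.univ (MLPEdge L n) (j + 1) ⊓
        LinearMap.ker (pBoundary K (MLPVertex L n) j) =
      Submodule.map (pBoundary K (MLPVertex L n) (j + 1))
        (omegaSub K (MLPVertex L n) Set.univ (MLPEdge L n) (j + 2)) := by
    apply le_antisymm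
    · rintro z hz
      obtain ⟨hzΩ, hzk⟩ := Submodule.mem_inf.mp hz
      have hzA : z ∈ (Finsupp.supported K K {x | IsAllowed (MLPVertex L n) Set.univ (MLPEdge L n) j x} :
          Submodule K (PChain K (MLPVertex L n) (j+1))) := hzΩ.1
      have hz0 : pBoundary K (MLPVertex L n) j z = 0 := hzk
      cases j with
      | zero =>
          have hcyc : aug K (MLPVertex L n) z = 0 := by rw [← aug_eq]; exact hz0
          obtain ⟨h, hha, hhd⟩ := main_zero K hn (by omega) L z hcyc
            (fun x hx => by omega)
          refine ⟨h, ?_, ?_⟩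
          · refine Submodule.mem_inf.mpr ⟨?_, Submodule.mem_comap.mpr ?_⟩
            · exact (Finsupp.mem_supported K h).mpr
                (fun x hx => (adm_iff 1 x).mpr (hha x (Finset.mem_coe.mp hx)))
            · have hhd' : pBoundary K (MLPVertex L n) (0+1) h = z := hhd
              rw [hhd']
              exact hzA
          · rw [dB_eq]; exact hhd
      | succ q =>
          have hadm : ∀ x ∈ z.support, Adm (q+1) x := by
            intro x hx
            exact (adm_iff (q+1) x).mp ((Finsupp.mem_supported K z).mp hzA hx)
          have hcyc : dB K (MLPVertex L n) q z = 0 := by rw [← dB_eq]; exact hz0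
          obtain ⟨h, hha, hhd⟩ := main_pos K hn q (by omega) L z hadm hcyc
            (fun x hx => by omega)
          refine ⟨h, ?_, ?_⟩
          · refine Submodule.mem_inf.mpr ⟨?_, Submodule.mem_comap.mpr ?_⟩
            · exact (Finsupp.mem_supported K h).mpr
                (fun x hx => (adm_iff (q+2) x).mpr (hha x (Finset.mem_coe.mp hx)))
            · have hhd' : pBoundary K (MLPVertex L n) (q+1+1) h = z := hhd
              rw [hhd']
              exact hzA
          · rw [dB_eq]; exact hhd
    · rintro z ⟨c, hc, rfl⟩
      obtain ⟨hcA, hcB⟩ := Submodule.mem_inf.mp hc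
      refine Submodule.mem_inf.mpr ⟨Submodule.mem_inf.mpr
        ⟨Submodule.mem_comap.mp hcB, Submodule.mem_comap.mpr ?_⟩, LinearMap.mem_ker.mpr (hdd c)⟩
      rw [hdd c]
      exact Submodule.zero_mem _
  refine ⟨key, ?_⟩
  have hbot : Submodule.map (Submodule.map (pBoundary K (MLPVertex L n) (j+1))
        (omegaSub K (MLPVertex L n) Set.univ (MLPEdge L n) (j+2))).mkQ
      (omegaSub K (MLPVertex L n) Set.univ (MLPEdge L n) (j + 1) ⊓
        LinearMap.ker (pBoundary K (MLPVertex L n) j)) = ⊥ := by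
    rw [key, eq_bot_iff]
    rintro x ⟨y, hy, rfl⟩
    exact (Submodule.mem_bot K).2 ((Submodule.Quotient.mk_eq_zero _).2 hy)
  rw [pathHomRank, hbot, rank_bot]
end
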